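/- arXiv:2011.07447 — 2 statements merged into one kernel-verified Lean document; each statement's English description precedes it below -/
import Mathlib

section
/- Let n, f, h, b be natural numbers with n ≥ 1, n > 2f, b ≤ f, and 1 ≤ h ≤ n, and let L, μ, σ be reals with 0 < μ ≤ L and 0 ≤ σ < 1/√n. Let k* = sup { (1 + (x − 1)/√(2x − 1))/√x : x ≥ 1 }. If nμ − (3 + k*) f L > 0, then the quantity R* = (nμ − (3 + k*) f L) / ((n − 2f)(1 + σ)L + (1 + k*) f L) is strictly positive, and for every real r with 0 < r < R*, the quantity β = (n − 2f)·(μ − r(1 + σ)L)/(1 + r) − b(1 + k_h σ)L is strictly positive. -/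
/-- `k_x = 1 + (x - 1)/√(2x - 1)` for `x ≥ 1`. -/
noncomputable def kfun (x : ℝ) : ℝ := 1 + (x - 1) / Real.sqrt (2 * x - 1)

/-- `k* = sup { k_x / √x : x ≥ 1 }`. -/
noncomputable def kstar : ℝ := sSup {y : ℝ | ∃ x : ℝ, 1 ≤ x ∧ y = kfun x / Real.sqrt x}

lemma kfun_ge_one {x : ℝ} (hx : 1 ≤ x) : 1 ≤ kfun x := by
  have h1 : (0:ℝ) ≤ Real.sqrt (2 * x - 1) := Real.sqrt_nonneg _
  have : 0 ≤ (x - 1) / Real.sqrt (2 * x - 1) := div_nonneg (by linarith) h1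
  unfold kfun; linarith

lemma kfun_div_le_two {x : ℝ} (hx : 1 ≤ x) : kfun x / Real.sqrt x ≤ 2 := by
  have hs1 : (1:ℝ) ≤ Real.sqrt x :=
    le_trans Real.sqrt_one.symm.le (Real.sqrt_le_sqrt hx)
  have hsx : 0 < Real.sqrt x := by linarith
  have h2 : (1:ℝ) ≤ Real.sqrt (2 * x - 1) :=
    le_trans Real.sqrt_one.symm.le (Real.sqrt_le_sqrt (by linarith))
  have hkey : x - 1 ≤ Real.sqrt x * Real.sqrt (2 * x - 1) := by
    rw [← Real.sqrt_mul (by linarith : (0:ℝ) ≤ x)]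
    have := Real.sqrt_le_sqrt (show (x-1)^2 ≤ x * (2*x-1) by nlinarith)
    calc x - 1 = Real.sqrt ((x-1)^2) := by
          rw [Real.sqrt_sq (by linarith)]
      _ ≤ _ := this
  have hk : kfun x ≤ 1 + Real.sqrt x := by
    unfold kfun
    have : (x - 1) / Real.sqrt (2 * x - 1) ≤ Real.sqrt x := by
      rw [div_le_iff₀ (by linarith)]; linarith [hkey]
    linarith
  rw [div_le_iff₀ hsx]
  nlinarith

lemma le_kstar' {x : ℝ} (hx : 1 ≤ x) : kfun x / Real.sqrt x ≤ kstar := by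
  have hbdd : BddAbove {y : ℝ | ∃ x : ℝ, 1 ≤ x ∧ y = kfun x / Real.sqrt x} := by
    refine ⟨2, ?_⟩
    rintro y ⟨z, hz, rfl⟩; exact kfun_div_le_two hz
  exact le_csSup hbdd ⟨x, hx, rfl⟩

lemma one_le_kstar' : 1 ≤ kstar := by
  have := le_kstar' (le_refl 1)
  simpa [kfun] using this

/-- Lemma 4: under `σ < 1/√n`, if `nμ - (3 + k*) f L > 0` then the bound `R*` is positive,
and every `r` with `0 < r < R*` makes `β > 0`. -/
theorem beta_pos_of_r_lt_strict
    (n f h b : ℕ) (hn : 1 ≤ n) (hn2f : 2 * f < n) (hbf : b ≤ f) (hh1 : 1 ≤ h) (hhn : h ≤ n)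
    (L μ σ : ℝ) (hμ : 0 < μ) (hμL : μ ≤ L) (hσ0 : 0 ≤ σ) (hσ : σ < 1 / Real.sqrt n)
    (Rstar : ℝ)
    (hR : Rstar = ((n : ℝ) * μ - (3 + kstar) * f * L) /
      (((n : ℝ) - 2 * f) * (1 + σ) * L + (1 + kstar) * f * L))
    (hnum : 0 < (n : ℝ) * μ - (3 + kstar) * f * L) :
    0 < Rstar ∧ ∀ r : ℝ, 0 < r → r < Rstar →
      0 < ((n : ℝ) - 2 * f) * (μ - r * (1 + σ) * L) / (1 + r)
            - (b : ℝ) * (1 + kfun h * σ) * L := by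
  have hL : 0 < L := lt_of_lt_of_le hμ hμL
  have hK : 1 ≤ kstar := one_le_kstar'
  have hf0 : (0:ℝ) ≤ f := Nat.cast_nonneg f
  have hm : (0:ℝ) < (n : ℝ) - 2 * f := by
    have : (2 * f : ℝ) < n := by exact_mod_cast hn2f
    linarith
  have hD : 0 < ((n : ℝ) - 2 * f) * (1 + σ) * L + (1 + kstar) * f * L := by
    have h1 : 0 < ((n : ℝ) - 2 * f) * (1 + σ) * L := by positivity
    have h2 : 0 ≤ (1 + kstar) * f * L :=
      mul_nonneg (mul_nonneg (by linarith) hf0) hL.le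
    linarith
  have hRpos : 0 < Rstar := by rw [hR]; exact div_pos hnum hD
  refine ⟨hRpos, fun r hr hrR => ?_⟩
  -- key: kfun h * σ ≤ kstar
  have hh1' : (1:ℝ) ≤ (h:ℝ) := by exact_mod_cast hh1
  have hkh : 1 ≤ kfun (h:ℝ) := kfun_ge_one hh1'
  have hsh : 0 < Real.sqrt (h:ℝ) := Real.sqrt_pos.mpr (by linarith)
  have hshn : Real.sqrt (h:ℝ) ≤ Real.sqrt (n:ℝ) :=
    Real.sqrt_le_sqrt (by exact_mod_cast hhn)
  have hc : kfun (h:ℝ) * σ ≤ kstar := by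
    have h1 : kfun (h:ℝ) * σ ≤ kfun (h:ℝ) * (1 / Real.sqrt (n:ℝ)) :=
      mul_le_mul_of_nonneg_left (le_of_lt hσ) (by linarith)
    have h2 : kfun (h:ℝ) * (1 / Real.sqrt (n:ℝ)) ≤ kfun (h:ℝ) / Real.sqrt (h:ℝ) := by
      rw [mul_one_div]
      apply div_le_div_of_nonneg_left (by linarith) hsh hshn
    exact le_trans h1 (le_trans h2 (le_kstar' hh1'))
  have hc0 : 0 ≤ kfun (h:ℝ) * σ := mul_nonneg (by linarith) hσ0
  have hb0 : (0:ℝ) ≤ b := Nat.cast_nonneg b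
  have hbf' : (b:ℝ) ≤ f := by exact_mod_cast hbf
  -- from r < Rstar
  have hrD : r * (((n : ℝ) - 2 * f) * (1 + σ) * L + (1 + kstar) * f * L)
      < (n : ℝ) * μ - (3 + kstar) * f * L := by
    rw [hR] at hrR
    exact (lt_div_iff₀ hD).mp hrR
  have h2 : (b:ℝ) * (1 + kfun (h:ℝ) * σ) ≤ (f:ℝ) * (1 + kstar) :=
    mul_le_mul hbf' (by linarith) (by linarith) hf0
  have hr1 : (0:ℝ) < 1 + r := by linarith
  have hnumer : 0 < ((n : ℝ) - 2 * f) * (μ - r * (1 + σ) * L)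
      - (1 + r) * ((b : ℝ) * (1 + kfun (h:ℝ) * σ) * L) := by
    have hbound : (1 + r) * ((b : ℝ) * (1 + kfun (h:ℝ) * σ) * L)
        ≤ (1 + r) * ((f:ℝ) * (1 + kstar) * L) := by
      apply mul_le_mul_of_nonneg_left _ (le_of_lt hr1)
      exact mul_le_mul_of_nonneg_right h2 (le_of_lt hL)
    nlinarith [mul_nonneg hf0 (sub_nonneg.mpr hμL)]
  have heq : ((n : ℝ) - 2 * f) * (μ - r * (1 + σ) * L) / (1 + r)
        - (b : ℝ) * (1 + kfun (h:ℝ) * σ) * L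
      = (((n : ℝ) - 2 * f) * (μ - r * (1 + σ) * L)
        - (1 + r) * ((b : ℝ) * (1 + kfun (h:ℝ) * σ) * L)) / (1 + r) := by
    field_simp
  rw [heq]
  exact div_pos hnumer hr1
end

section
/- Let (Ω, 𝓕, P) be a probability space, let h ≥ 1 be a natural number, and let g_1, …, g_h : Ω → ℝ^d be independent, identically distributed, square-integrable random vectors with common mean E[g_j] = v ∈ ℝ^d and E‖g_j − v‖² ≤ σ²‖v‖² for a real σ ≥ 0. Let M(ω) = max_{1 ≤ j ≤ h} ‖g_j(ω)‖. Then E[M²] ≤ (hσ² + (1 + k_h σ)²)·‖v‖², where k_h = 1 + (h − 1)/√(2h − 1). -/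
/-!
Write `Y j = ‖g j - v‖` and `N = max_j Y j`. The triangle inequality gives `M ≤ ‖v‖ + N`, hence
`E[M²] ≤ ‖v‖² + 2‖v‖ E[N] + E[N²]`, and `E[N²] ≤ ∑_j E[Y j²] ≤ h σ² ‖v‖²`.

The middle term is the expected maximum of `h` i.i.d. nonnegative variables, bounded by
`E[N] ≤ h / √(2h - 1) · √(E[Y²]) ≤ k_h σ ‖v‖`. With the tail `u t = P(Y > t)`, independence gives
`P(N > t) = 1 - (1 - u t)^h = ∫₀^{u t} h (1 - r)^(h-1) dr`. Swapping the integrals turns `E[N]` into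
`∫ m r · h (1 - r)^(h-1) dr`, where `m r = |{t > 0 | u t > r}|` is the quantile function of `Y` at
level `1 - r`, so `∫ m² = E[Y²]`; Cauchy–Schwarz and `∫₀¹ h² (1 - r)^(2h-2) dr = h² / (2h - 1)`
conclude.
-/

open MeasureTheory ProbabilityTheory Set
open scoped ProbabilityTheory ENNReal

noncomputable def minUniformDensity (n : ℕ) : ℝ → ℝ :=
  (Icc 0 1).indicator fun r => n * (1 - r) ^ (n - 1)

lemma minUniformDensity_nonneg (n : ℕ) (r : ℝ) : 0 ≤ minUniformDensity n r :=
  indicator_nonneg (fun _ hr => mul_nonneg n.cast_nonneg (pow_nonneg (sub_nonneg.2 hr.2) _)) r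

lemma measurable_minUniformDensity (n : ℕ) : Measurable (minUniformDensity n) :=
  (by fun_prop : Measurable fun r : ℝ => n * (1 - r) ^ (n - 1)).indicator measurableSet_Icc

lemma intervalIntegrable_minUniformDensity (n : ℕ) (a b : ℝ) :
    IntervalIntegrable (minUniformDensity n) volume a b := by
  have hcont : IntervalIntegrable (fun r : ℝ => n * (1 - r) ^ (n - 1)) volume a b :=
    (by fun_prop : Continuous fun r : ℝ => n * (1 - r) ^ (n - 1)).intervalIntegrable a b
  exact ⟨hcont.1.indicator measurableSet_Icc, hcont.2.indicator measurableSet_Icc⟩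

lemma integral_minUniformDensity {n : ℕ} (hn : 0 < n) {x : ℝ} (hx0 : 0 ≤ x) (hx1 : x ≤ 1) :
    ∫ r in 0..x, minUniformDensity n r = 1 - (1 - x) ^ n := by
  have hcongr : EqOn (minUniformDensity n) (fun r => n * (1 - r) ^ (n - 1)) (uIcc 0 x) := by
    intro r hr
    rw [uIcc_of_le hx0] at hr
    exact indicator_of_mem (show r ∈ Icc 0 1 from ⟨hr.1, hr.2.trans hx1⟩) _
  rw [intervalIntegral.integral_congr hcongr, intervalIntegral.integral_const_mul,
    intervalIntegral.integral_comp_sub_left (fun s => s ^ (n - 1)), integral_pow,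
    Nat.sub_add_cancel hn]
  have : (n : ℝ) ≠ 0 := by positivity
  field_simp
  push_cast [Nat.cast_sub hn]
  ring

lemma lintegral_minUniformDensity_sq {n : ℕ} (hn : 0 < n) :
    ∫⁻ r in Ioi 0, ENNReal.ofReal (minUniformDensity n r) ^ 2
      = ENNReal.ofReal (n ^ 2 / (2 * n - 1)) := by
  have hsq : ∀ r, ENNReal.ofReal (minUniformDensity n r) ^ 2
      = (Icc 0 1).indicator (fun r => ENNReal.ofReal ((n * (1 - r) ^ (n - 1)) ^ 2)) r := by
    intro r
    rw [← ENNReal.ofReal_pow (minUniformDensity_nonneg n r), minUniformDensity]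
    by_cases hr : r ∈ Icc (0 : ℝ) 1 <;> simp [hr]
  have hIoc : Icc (0 : ℝ) 1 ∩ Ioi 0 = Ioc 0 1 :=
    Set.ext fun r => ⟨fun h => ⟨h.2, h.1.2⟩, fun h => ⟨⟨h.1.le, h.2⟩, h.1⟩⟩
  simp_rw [hsq]
  rw [lintegral_indicator measurableSet_Icc, Measure.restrict_restrict measurableSet_Icc, hIoc,
    ← ofReal_integral_eq_lintegral_ofReal, ← intervalIntegral.integral_of_le zero_le_one]
  · congr 1
    simp_rw [mul_pow, ← pow_mul]
    rw [intervalIntegral.integral_const_mul,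
      intervalIntegral.integral_comp_sub_left (fun s => s ^ ((n - 1) * 2)), integral_pow]
    norm_num [Nat.cast_sub hn]
    ring
  · exact (by fun_prop : Continuous fun r : ℝ => (n * (1 - r) ^ (n - 1)) ^ 2).integrableOn_Icc
      |>.mono_set Ioc_subset_Icc_self
  · exact ae_of_all _ fun r => sq_nonneg _

lemma lintegral_Ioo_ofReal_two_mul {c : ℝ} (hc : 0 ≤ c) :
    ∫⁻ t in Ioo 0 c, ENNReal.ofReal (2 * t) = ENNReal.ofReal (c ^ 2) := by
  rw [← ofReal_integral_eq_lintegral_ofReal, ← integral_Ioc_eq_integral_Ioo,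
    ← intervalIntegral.integral_of_le hc, intervalIntegral.integral_const_mul, integral_id]
  · ring_nf
  · exact (continuous_const.mul continuous_id).integrableOn_Icc.mono_set Ioo_subset_Icc_self
  · exact (ae_restrict_iff' measurableSet_Ioo).2 (ae_of_all _ fun t ht => by
      simp only [Pi.zero_apply]; linarith [ht.1])

lemma volume_sq_le_lintegral_two_mul {E : Set ℝ} (hE0 : E ⊆ Ioi 0)
    (hE : ∀ a ∈ E, Ioo 0 a ⊆ E) :
    volume E ^ 2 ≤ ∫⁻ t in E, ENNReal.ofReal (2 * t) := by
  refine ENNReal.le_of_forall_nnreal_lt fun r hr => ?_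
  have hrE : (NNReal.sqrt r : ℝ≥0∞) < volume E := by
    by_contra! hle
    have := pow_le_pow_left' hle 2
    rw [← ENNReal.coe_pow, NNReal.sq_sqrt] at this
    exact hr.not_ge this
  have hsub : Ioo 0 (NNReal.sqrt r : ℝ) ⊆ E := by
    intro x hx
    by_contra hxE
    have hEx : E ⊆ Ioc 0 x := fun a ha => ⟨hE0 ha, not_lt.1 fun hxa => hxE (hE a ha ⟨hx.1, hxa⟩)⟩
    have := hrE.trans_le (measure_mono hEx)
    rw [Real.volume_Ioc, sub_zero, ← ENNReal.ofReal_coe_nnreal,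
      ENNReal.ofReal_lt_ofReal_iff hx.1] at this
    exact this.not_gt hx.2
  calc (r : ℝ≥0∞) = ∫⁻ t in Ioo 0 (NNReal.sqrt r : ℝ), ENNReal.ofReal (2 * t) := by
        rw [lintegral_Ioo_ofReal_two_mul NNReal.zero_le_coe, ← NNReal.coe_pow, NNReal.sq_sqrt,
          ENNReal.ofReal_coe_nnreal]
    _ ≤ _ := lintegral_mono_set hsub

lemma lintegral_volume_superlevel_sq_le {u : ℝ → ℝ} (hu : Antitone u) (hu0 : ∀ t, 0 ≤ u t) :
    ∫⁻ r in Ioi 0, volume.restrict (Ioi 0) {t | r < u t} ^ 2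
      ≤ ∫⁻ t in Ioi 0, ENNReal.ofReal (u t) * ENNReal.ofReal (2 * t) := by
  set ν := (volume.restrict (Ioi (0 : ℝ))).withDensity fun t => ENNReal.ofReal (2 * t)
  have hν : ∫⁻ t in Ioi 0, ENNReal.ofReal (u t) * ENNReal.ofReal (2 * t)
      = ∫⁻ r in Ioi 0, ν {t | r < u t} := by
    rw [← lintegral_eq_lintegral_meas_lt ν (ae_of_all _ hu0) hu.measurable.aemeasurable,
      lintegral_withDensity_eq_lintegral_mul _ (by fun_prop) hu.measurable.ennreal_ofReal]
    simp_rw [Pi.mul_apply, mul_comm]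
  rw [hν]
  refine lintegral_mono fun r => ?_
  have hmeas : MeasurableSet {t | r < u t} := hu.measurable measurableSet_Ioi
  rw [withDensity_apply _ hmeas, Measure.restrict_restrict hmeas,
    Measure.restrict_apply hmeas]
  exact volume_sq_le_lintegral_two_mul (fun t ht => ht.2)
    fun a ha t ht => ⟨ha.1.trans_le (hu ht.2.le), ht.1⟩

lemma lintegral_one_sub_one_sub_pow_le {u : ℝ → ℝ} (hu : Antitone u) (hu0 : ∀ t, 0 ≤ u t)
    (hu1 : ∀ t, u t ≤ 1) {n : ℕ} (hn : 0 < n) :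
    ∫⁻ t in Ioi 0, ENNReal.ofReal (1 - (1 - u t) ^ n)
      ≤ ENNReal.ofReal (n / √(2 * n - 1))
        * (∫⁻ t in Ioi 0, ENNReal.ofReal (u t) * ENNReal.ofReal (2 * t)) ^ (1 / 2 : ℝ) := by
  set m : ℝ → ℝ≥0∞ := fun r => volume.restrict (Ioi 0) {t | r < u t}
  have hm : Antitone m := fun r s hrs => measure_mono fun t ht => hrs.trans_lt ht
  calc ∫⁻ t in Ioi 0, ENNReal.ofReal (1 - (1 - u t) ^ n)
      = ∫⁻ t in Ioi 0, ENNReal.ofReal (∫ r in 0..u t, minUniformDensity n r) := by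
        simp_rw [integral_minUniformDensity hn (hu0 _) (hu1 _)]
    _ = ∫⁻ r in Ioi 0, m r * ENNReal.ofReal (minUniformDensity n r) :=
        lintegral_comp_eq_lintegral_meas_lt_mul _ (ae_of_all _ hu0) hu.measurable.aemeasurable
          (fun t _ => intervalIntegrable_minUniformDensity n 0 t)
          (ae_of_all _ (minUniformDensity_nonneg n))
    _ ≤ (∫⁻ r in Ioi 0, m r ^ (2 : ℝ)) ^ (1 / 2 : ℝ)
          * (∫⁻ r in Ioi 0, ENNReal.ofReal (minUniformDensity n r) ^ (2 : ℝ)) ^ (1 / 2 : ℝ) :=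
        ENNReal.lintegral_mul_le_Lp_mul_Lq _ Real.HolderConjugate.two_two
          hm.measurable.aemeasurable (measurable_minUniformDensity n).ennreal_ofReal.aemeasurable
    _ ≤ (∫⁻ t in Ioi 0, ENNReal.ofReal (u t) * ENNReal.ofReal (2 * t)) ^ (1 / 2 : ℝ)
          * ENNReal.ofReal (n ^ 2 / (2 * n - 1)) ^ (1 / 2 : ℝ) := by
        simp_rw [ENNReal.rpow_two, lintegral_minUniformDensity_sq hn]
        gcongr ?_ ^ _ * _
        exact lintegral_volume_superlevel_sq_le hu hu0
    _ = _ := by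
        have : (1 : ℝ) ≤ n := by exact_mod_cast hn
        rw [mul_comm, ENNReal.ofReal_rpow_of_nonneg (by bound) (by norm_num),
          ← Real.sqrt_eq_rpow, Real.sqrt_div' _ (by linarith), Real.sqrt_sq (Nat.cast_nonneg n)]

section Probability

variable {Ω : Type*} [MeasurableSpace Ω]

lemma lintegral_sq_eq_lintegral_meas_lt_mul (μ : Measure Ω) {Y : Ω → ℝ} (hY0 : 0 ≤ᵐ[μ] Y)
    (hY : AEMeasurable Y μ) :
    ∫⁻ ω, ENNReal.ofReal (Y ω ^ 2) ∂μ
      = ∫⁻ t in Ioi 0, μ {ω | t < Y ω} * ENNReal.ofReal (2 * t) := by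
  have hsq : ∀ y : ℝ, y ^ 2 = ∫ t in 0..y, 2 * t := fun y => by
    rw [intervalIntegral.integral_const_mul, integral_id]; ring
  rw [lintegral_congr fun ω => by rw [hsq]]
  exact lintegral_comp_eq_lintegral_meas_lt_mul μ hY0 hY
    (fun t _ => (continuous_const.mul continuous_id).intervalIntegrable 0 t)
    ((ae_restrict_iff' measurableSet_Ioi).2 (ae_of_all _ fun t ht => by
      linarith [mem_Ioi.1 ht]))

variable {ι : Type*} [Fintype ι] {Y : ι → Ω → ℝ}

lemma integral_iSup_sq_le_sum {μ : Measure Ω} [Nonempty ι] (hY : ∀ i, MemLp (Y i) 2 μ) :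
    ∫ ω, (⨆ i, Y i ω) ^ 2 ∂μ ≤ ∑ i, ∫ ω, Y i ω ^ 2 ∂μ := by
  rw [← integral_finsetSum _ fun i _ => (hY i).integrable_sq]
  refine integral_mono_of_nonneg (ae_of_all _ fun ω => sq_nonneg _)
    (integrable_finsetSum _ fun i _ => (hY i).integrable_sq) (ae_of_all _ fun ω => ?_)
  obtain ⟨i, hi⟩ := exists_eq_ciSup_of_finite (f := fun i => Y i ω)
  change (⨆ i, Y i ω) ^ 2 ≤ ∑ i, Y i ω ^ 2
  rw [← hi]
  exact Finset.single_le_sum (f := fun i => Y i ω ^ 2) (fun i _ => sq_nonneg _)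
    (Finset.mem_univ i)

lemma memLp_iSup {μ : Measure Ω} [Nonempty ι] {p : ℝ≥0∞} (hY : ∀ i, MemLp (Y i) p μ) :
    MemLp (fun ω => ⨆ i, Y i ω) p μ := by
  have hsup : (fun ω => ⨆ i, Y i ω) = Finset.univ.sup' Finset.univ_nonempty Y := by
    ext ω
    rw [Finset.sup'_apply, Finset.sup'_univ_eq_ciSup]
  rw [hsup]
  exact Finset.sup'_induction (p := fun f => MemLp f p μ) _ _ (fun _ hf _ hg => hf.sup hg)
    fun i _ => hY i

variable {P : Measure Ω} [IsProbabilityMeasure P]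

lemma integral_sq_le_of_le_add {M N : Ω → ℝ} {c : ℝ} (hN : MemLp N 2 P) (hM0 : ∀ ω, 0 ≤ M ω)
    (hMN : ∀ ω, M ω ≤ c + N ω) :
    ∫ ω, M ω ^ 2 ∂P ≤ c ^ 2 + 2 * c * ∫ ω, N ω ∂P + ∫ ω, N ω ^ 2 ∂P := by
  have hlin : Integrable (fun ω => c ^ 2 + 2 * c * N ω) P :=
    (integrable_const _).add ((hN.integrable one_le_two).const_mul _)
  calc ∫ ω, M ω ^ 2 ∂P ≤ ∫ ω, (c ^ 2 + 2 * c * N ω + N ω ^ 2) ∂P :=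
        integral_mono_of_nonneg (ae_of_all _ fun _ => sq_nonneg _) (hlin.add hN.integrable_sq)
          (ae_of_all _ fun ω => by nlinarith [hM0 ω, hMN ω])
    _ = c ^ 2 + 2 * c * ∫ ω, N ω ∂P + ∫ ω, N ω ^ 2 ∂P := by
        rw [integral_add hlin hN.integrable_sq,
          integral_add (integrable_const _) ((hN.integrable one_le_two).const_mul _),
          integral_const, integral_const_mul]
        simp

lemma measure_lt_iSup_eq {j : ι} (hindep : iIndepFun Y P)
    (hident : ∀ i, IdentDistrib (Y i) (Y j) P P) (hY : ∀ i, AEMeasurable (Y i) P) (t : ℝ) :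
    P {ω | t < ⨆ i, Y i ω} = 1 - (1 - P {ω | t < Y j ω}) ^ Fintype.card ι := by
  have : Nonempty ι := ⟨j⟩
  have hle : {ω | ⨆ i, Y i ω ≤ t} = ⋂ i, Y i ⁻¹' Iic t := by
    ext ω
    simp only [mem_ofPred_eq, mem_iInter, mem_preimage, mem_Iic]
    exact ciSup_le_iff (finite_range _).bddAbove
  have hcompl : ∀ {f : Ω → ℝ}, AEMeasurable f P → P {ω | t < f ω} = 1 - P {ω | f ω ≤ t} :=
    fun hf => by
      rw [← prob_compl_eq_one_sub₀ (nullMeasurableSet_le hf aemeasurable_const)]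
      congr 1; ext ω; simp
  rw [hcompl (AEMeasurable.iSup hY), hcompl (hY j),
    ENNReal.sub_sub_cancel ENNReal.one_ne_top prob_le_one, hle,
    hindep.meas_iInter fun i => ⟨Iic t, measurableSet_Iic, rfl⟩,
    Finset.prod_congr rfl fun i _ => (hident i).measure_mem_eq measurableSet_Iic,
    Finset.prod_const, Finset.card_univ]
  rfl

lemma lintegral_iSup_le_of_iIndepFun {j : ι} (hindep : iIndepFun Y P)
    (hident : ∀ i, IdentDistrib (Y i) (Y j) P P) (hY : ∀ i, AEMeasurable (Y i) P)
    (hY0 : ∀ i ω, 0 ≤ Y i ω) :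
    ∫⁻ ω, ENNReal.ofReal (⨆ i, Y i ω) ∂P
      ≤ ENNReal.ofReal (Fintype.card ι / √(2 * Fintype.card ι - 1))
        * (∫⁻ ω, ENNReal.ofReal (Y j ω ^ 2) ∂P) ^ (1 / 2 : ℝ) := by
  set u : ℝ → ℝ := fun t => P.real {ω | t < Y j ω}
  have hu : Antitone u := fun s t hst => measureReal_mono fun ω hω => hst.trans_lt hω
  have htail : ∀ t,
      P {ω | t < ⨆ i, Y i ω} = ENNReal.ofReal (1 - (1 - u t) ^ Fintype.card ι) := by
    intro t
    have hu1 : u t ≤ 1 := measureReal_le_one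
    rw [measure_lt_iSup_eq hindep hident hY t, ← ofReal_measureReal, ← ENNReal.ofReal_one,
      ← ENNReal.ofReal_sub _ measureReal_nonneg, ← ENNReal.ofReal_pow (by linarith),
      ← ENNReal.ofReal_sub _ (pow_nonneg (by linarith) _)]
  rw [lintegral_eq_lintegral_meas_lt P (ae_of_all _ fun ω => Real.iSup_nonneg fun i => hY0 i ω)
      (AEMeasurable.iSup hY), lintegral_sq_eq_lintegral_meas_lt_mul P (ae_of_all _ (hY0 j)) (hY j)]
  have hq : ∀ t, P {ω | t < Y j ω} * ENNReal.ofReal (2 * t)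
      = ENNReal.ofReal (u t) * ENNReal.ofReal (2 * t) := fun t => by rw [ofReal_measureReal]
  rw [lintegral_congr htail, lintegral_congr hq]
  exact lintegral_one_sub_one_sub_pow_le hu (fun t => measureReal_nonneg)
    (fun t => measureReal_le_one) (Fintype.card_pos_iff.2 ⟨j⟩)

lemma integral_iSup_le_of_iIndepFun {j : ι} (hindep : iIndepFun Y P)
    (hident : ∀ i, IdentDistrib (Y i) (Y j) P P) (hY : ∀ i, MemLp (Y i) 2 P)
    (hY0 : ∀ i ω, 0 ≤ Y i ω) :
    ∫ ω, ⨆ i, Y i ω ∂P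
      ≤ Fintype.card ι / √(2 * Fintype.card ι - 1) * √(∫ ω, Y j ω ^ 2 ∂P) := by
  have hmeas : ∀ i, AEMeasurable (Y i) P := fun i => (hY i).aestronglyMeasurable.aemeasurable
  have key := ENNReal.toReal_mono (ENNReal.mul_ne_top ENNReal.ofReal_ne_top
    (ENNReal.rpow_ne_top_of_nonneg (by norm_num) (hY j).integrable_sq.lintegral_lt_top.ne))
    (lintegral_iSup_le_of_iIndepFun hindep hident hmeas hY0)
  rw [ENNReal.toReal_mul, ENNReal.toReal_ofReal (by positivity), ← ENNReal.toReal_rpow,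
    ← Real.sqrt_eq_rpow] at key
  rwa [integral_eq_lintegral_of_nonneg_ae (ae_of_all _ fun ω => Real.iSup_nonneg fun i => hY0 i ω)
      (AEMeasurable.iSup hmeas).aestronglyMeasurable,
    integral_eq_lintegral_of_nonneg_ae (ae_of_all _ fun ω => sq_nonneg _)
      ((hmeas j).pow_const 2).aestronglyMeasurable]

end Probability

lemma iSup_norm_le_norm_add_iSup_norm_sub {E ι : Type*} [SeminormedAddCommGroup E] [Finite ι]
    [Nonempty ι] (x : ι → E) (v : E) : ⨆ i, ‖x i‖ ≤ ‖v‖ + ⨆ i, ‖x i - v‖ :=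
  ciSup_le fun i => (norm_le_insert' _ v).trans <| by
    gcongr
    exact le_ciSup (f := fun i => ‖x i - v‖) (finite_range _).bddAbove i

lemma div_sqrt_le_kfun {x : ℝ} (hx : 1 ≤ x) : x / √(2 * x - 1) ≤ kfun x := by
  have hs : 1 ≤ √(2 * x - 1) := Real.one_le_sqrt.2 (by linarith)
  have hsplit : x / √(2 * x - 1) = 1 / √(2 * x - 1) + (x - 1) / √(2 * x - 1) := by ring
  rw [kfun, hsplit]
  gcongr
  exact (div_le_one (by positivity)).2 hs

theorem expectation_max_norm_sq_le_general
    {Ω : Type*} [MeasureSpace Ω] [IsProbabilityMeasure (ℙ : Measure Ω)]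
    (d h : ℕ)
    (g : Fin h → Ω → EuclideanSpace ℝ (Fin d))
    (hindep : iIndepFun g ℙ)
    (hident : ∀ i j, IdentDistrib (g i) (g j) ℙ ℙ)
    (hL2 : ∀ j, MemLp (g j) 2 ℙ)
    (v : EuclideanSpace ℝ (Fin d))
    (σ : ℝ) (hσ : 0 ≤ σ) (hvar : ∀ j, ∫ ω, ‖g j ω - v‖ ^ 2 ∂ℙ ≤ σ ^ 2 * ‖v‖ ^ 2) :
    ∫ ω, (⨆ j : Fin h, ‖g j ω‖) ^ 2 ∂ℙ
      ≤ ((h : ℝ) * σ ^ 2 + (1 + kfun h * σ) ^ 2) * ‖v‖ ^ 2 := by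
  rcases Nat.eq_zero_or_pos h with rfl | hh
  · simp [Real.iSup_of_isEmpty]
    positivity
  have : Nonempty (Fin h) := ⟨⟨0, hh⟩⟩
  have hdist : Measurable fun x : EuclideanSpace ℝ (Fin d) => ‖x - v‖ := by fun_prop
  have hY : ∀ j, MemLp (fun ω => ‖g j ω - v‖) 2 ℙ := fun j => ((hL2 j).sub (memLp_const v)).norm
  have hk : (h : ℝ) / √(2 * h - 1) ≤ kfun h := div_sqrt_le_kfun (Nat.one_le_cast.2 hh)
  have hEN : ∫ ω, ⨆ j, ‖g j ω - v‖ ∂ℙ ≤ kfun h * (σ * ‖v‖) := by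
    have hmax := integral_iSup_le_of_iIndepFun (j := ⟨0, hh⟩) (hindep.comp _ fun _ => hdist)
      (fun i => (hident i _).comp hdist) hY fun _ _ => norm_nonneg _
    have hsd : √(∫ ω, ‖g ⟨0, hh⟩ ω - v‖ ^ 2 ∂ℙ) ≤ σ * ‖v‖ :=
      Real.sqrt_le_iff.2 ⟨by positivity, (hvar _).trans_eq (mul_pow _ _ _).symm⟩
    simp only [Fintype.card_fin] at hmax
    exact hmax.trans (mul_le_mul hk hsd (Real.sqrt_nonneg _) (le_trans (by positivity) hk))
  have hEN2 : ∫ ω, (⨆ j, ‖g j ω - v‖) ^ 2 ∂ℙ ≤ h * (σ ^ 2 * ‖v‖ ^ 2) :=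
    (integral_iSup_sq_le_sum hY).trans
      ((Finset.sum_le_sum fun j (_ : j ∈ Finset.univ) => hvar j).trans_eq (by simp))
  calc ∫ ω, (⨆ j, ‖g j ω‖) ^ 2 ∂ℙ
      ≤ ‖v‖ ^ 2 + 2 * ‖v‖ * ∫ ω, ⨆ j, ‖g j ω - v‖ ∂ℙ + ∫ ω, (⨆ j, ‖g j ω - v‖) ^ 2 ∂ℙ :=
        integral_sq_le_of_le_add (memLp_iSup hY) (fun ω => Real.iSup_nonneg fun j => norm_nonneg _)
          fun ω => iSup_norm_le_norm_add_iSup_norm_sub (fun j => g j ω) v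
    _ ≤ _ := by
        nlinarith [mul_le_mul_of_nonneg_left hEN (by positivity : (0 : ℝ) ≤ 2 * ‖v‖),
          sq_nonneg (kfun h * σ * ‖v‖)]

/-- Lemma (second moment of the maximum): for `h ≥ 1` i.i.d. square-integrable random
vectors `g_1, …, g_h` in `ℝ^d` with mean `v` and `E‖g_j − v‖² ≤ σ²‖v‖²`, the maximum
`M = max_j ‖g_j‖` satisfies `E[M²] ≤ (hσ² + (1 + k_h σ)²)‖v‖²`. -/
theorem expectation_max_norm_sq_le
    {Ω : Type*} [MeasureSpace Ω] [IsProbabilityMeasure (ℙ : Measure Ω)]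
    (d h : ℕ) (hh : 1 ≤ h)
    (g : Fin h → Ω → EuclideanSpace ℝ (Fin d))
    (hindep : iIndepFun g ℙ)
    (hident : ∀ i j, IdentDistrib (g i) (g j) ℙ ℙ)
    (hL2 : ∀ j, MemLp (g j) 2 ℙ)
    (v : EuclideanSpace ℝ (Fin d)) (hmean : ∀ j, ∫ ω, g j ω ∂ℙ = v)
    (σ : ℝ) (hσ : 0 ≤ σ) (hvar : ∀ j, ∫ ω, ‖g j ω - v‖ ^ 2 ∂ℙ ≤ σ ^ 2 * ‖v‖ ^ 2) :
    ∫ ω, (⨆ j : Fin h, ‖g j ω‖) ^ 2 ∂ℙ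
      ≤ ((h : ℝ) * σ ^ 2 + (1 + kfun h * σ) ^ 2) * ‖v‖ ^ 2 :=
  expectation_max_norm_sq_le_general d h g hindep hident hL2 v σ hσ hvar
end
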